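/- Parameter efficiency of the DilatedRNN (paper's Theorem 1, combinatorial form): fix integers d ≥ 2 and M ≥ 1, and set m = M^{d−1}. Let s_1 = 1 and s_{i+1} = n_{i+1} · s_i for positive integers n_2, …, n_d with s_d = m. Then ∑_{n=0}^{m−1} r_s(n) ≥ ∑_{n=0}^{m−1} r_geom(n), where r_s(n) is the minimal coin count of n with denominations (s_1, …, s_d) and r_geom(n) is the minimal coin count of n with the geometric denominations (M^0, M^1, …, M^{d−1}). Equivalently, 2 · ∑_{n=0}^{m−1} r_s(n) ≥ m · (d−1) · (M−1), and the geometric chain attains this bound; i.e., among all divisor chains with s_1 = 1 and s_d = M^{d−1}, the exponentially increasing dilations M^0, …, M^{d−1} achieve the smallest average minimal coin count (hence the smallest mean recurrent length). -/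

import Mathlib

/-!
For a divisor chain the greedy algorithm is optimal: the greedy coin count `G` satisfies
`G (x + s j) ≤ G x + 1` for every denomination `s j`, so no representation uses fewer coins.
Writing `k i = s (i + 1) / s i`, the greedy digits `n % s (i + 1) / s i` of the numbers
`n < s (d - 1)` run uniformly through `0, …, k i - 1`, whence
`2 ∑_{n < s (d-1)} r_s(n) = s (d - 1) ∑ i, (k i - 1)`. Since `∏ k i = M ^ (d - 1)`, AM-GM gives
`∑ k i ≥ (d - 1) M`, with equality for the geometric chain `k i = M`.
-/

/-- The minimal coin count of `n` with the `d` denominations `s 0, …, s (d-1)`. -/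
noncomputable def minCoinCount (d : ℕ) (s : ℕ → ℕ) (n : ℕ) : ℕ :=
  sInf {k : ℕ | ∃ a : Fin d → ℕ,
    (∑ i : Fin d, a i * s (i : ℕ)) = n ∧ (∑ i : Fin d, a i) = k}

open Finset

theorem Finset.sum_range_mul_eq_sum_sum {M : Type*} [AddCommMonoid M] (f : ℕ → M) (a b : ℕ) :
    ∑ n ∈ range (b * a), f n = ∑ q ∈ range b, ∑ r ∈ range a, f (q * a + r) := by
  induction b with
  | zero => simp
  | succ b ih => rw [add_one_mul, sum_range_add, ih, sum_range_succ]

theorem two_mul_sum_range_mod_div {c : ℕ} (hc : 0 < c) (k Q : ℕ) :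
    2 * ∑ n ∈ range (Q * (k * c)), n % (k * c) / c = Q * (k * c) * (k - 1) := by
  have hperiodic :
      ∑ n ∈ range (Q * (k * c)), n % (k * c) / c = Q * ∑ r ∈ range (k * c), r / c := by
    have hblock : ∀ q, ∑ r ∈ range (k * c), (q * (k * c) + r) % (k * c) / c =
        ∑ r ∈ range (k * c), r / c :=
      fun q => sum_congr rfl fun r hr => by rw [Nat.mul_add_mod_of_lt (mem_range.mp hr)]
    rw [sum_range_mul_eq_sum_sum]
    simp only [hblock, sum_const, card_range, smul_eq_mul]
  have hblocks : ∑ r ∈ range (k * c), r / c = c * ∑ u ∈ range k, u := by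
    have hblock : ∀ u, ∑ r ∈ range c, (u * c + r) / c = c * u := fun u => by
      rw [sum_congr rfl fun r hr => by
        rw [mul_comm u c, Nat.mul_add_div hc, Nat.div_eq_of_lt (mem_range.mp hr), add_zero]]
      simp
    rw [sum_range_mul_eq_sum_sum, mul_sum]
    simp only [hblock]
  have hgauss := sum_range_id_mul_two k
  rw [hperiodic, hblocks]
  calc 2 * (Q * (c * ∑ u ∈ range k, u)) = Q * c * ((∑ u ∈ range k, u) * 2) := by ring
    _ = Q * (k * c) * (k - 1) := by rw [hgauss]; ring

theorem Real.card_mul_le_sum_of_prod_eq_pow {ι : Type*} (S : Finset ι) {z : ι → ℝ}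
    (hz : ∀ i ∈ S, 0 ≤ z i) {M : ℝ} (hM : 0 ≤ M) (hprod : ∏ i ∈ S, z i = M ^ #S) :
    #S * M ≤ ∑ i ∈ S, z i := by
  rcases S.eq_empty_or_nonempty with rfl | hS
  · simp
  have hcard : (0 : ℝ) < #S := by exact_mod_cast hS.card_pos
  have hamgm := Real.geom_mean_le_arith_mean_weighted S (fun _ => (#S : ℝ)⁻¹) z
    (fun _ _ => by positivity) (by simp [hcard.ne']) hz
  rw [Real.finsetProd_rpow S z hz, hprod, Real.pow_rpow_inv_natCast hM hS.card_pos.ne',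
    ← mul_sum] at hamgm
  exact (le_inv_mul_iff₀ hcard).mp hamgm

structure IsDivisorChain (d : ℕ) (s : ℕ → ℕ) : Prop where
  zero : s 0 = 1
  step : ∀ i, i + 1 < d → ∃ k, 0 < k ∧ s (i + 1) = k * s i

namespace IsDivisorChain

variable {d : ℕ} {s : ℕ → ℕ}

theorem pos (hs : IsDivisorChain d s) {i : ℕ} (hi : i < d) : 0 < s i := by
  induction i with
  | zero => simp [hs.zero]
  | succ i ih =>
    obtain ⟨k, hk, hsucc⟩ := hs.step i hi
    rw [hsucc]
    exact Nat.mul_pos hk (ih (by omega))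

theorem dvd_succ (hs : IsDivisorChain d s) {i : ℕ} (hi : i + 1 < d) : s i ∣ s (i + 1) := by
  obtain ⟨k, -, hsucc⟩ := hs.step i hi
  exact ⟨k, by rw [hsucc, mul_comm]⟩

theorem dvd_of_le (hs : IsDivisorChain d s) {i j : ℕ} (hij : i ≤ j) (hj : j < d) : s i ∣ s j := by
  induction j, hij using Nat.le_induction with
  | base => rfl
  | succ j _ ih => exact (ih (by omega)).trans (hs.dvd_succ hj)

theorem ratio_mul (hs : IsDivisorChain d s) {i : ℕ} (hi : i + 1 < d) :
    s (i + 1) / s i * s i = s (i + 1) :=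
  Nat.div_mul_cancel (hs.dvd_succ hi)

theorem prod_ratio (hs : IsDivisorChain d s) {t : ℕ} (ht : t < d) :
    ∏ i ∈ range t, s (i + 1) / s i = s t := by
  induction t with
  | zero => simp [hs.zero]
  | succ t ih => rw [prod_range_succ, ih (by omega), mul_comm, hs.ratio_mul ht]

end IsDivisorChain

theorem isDivisorChain_pow {M : ℕ} (hM : 0 < M) (d : ℕ) : IsDivisorChain d (M ^ ·) :=
  ⟨pow_zero M, fun i _ => ⟨M, hM, pow_succ' M i⟩⟩

/-- Coins used by the greedy algorithm with denominations `s 0, …, s t`. -/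
def greedyCount (s : ℕ → ℕ) (t n : ℕ) : ℕ :=
  ∑ i ∈ range t, n % s (i + 1) / s i + n / s t

section DivisorChain

variable {d : ℕ} {s : ℕ → ℕ}

theorem greedyCount_succ_add (hs : IsDivisorChain d s) {t : ℕ} (ht : t + 1 < d) (n : ℕ) :
    greedyCount s (t + 1) n + (s (t + 1) / s t - 1) * (n / s (t + 1)) = greedyCount s t n := by
  obtain ⟨k, hk, hsucc⟩ := hs.step t ht
  have hpos : 0 < s t := hs.pos (by omega)
  have hdigits := Nat.div_add_mod (n / s t) k
  rw [Nat.div_div_eq_div_mul, ← Nat.mod_mul_right_div_self, mul_comm (s t)] at hdigits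
  simp only [greedyCount, sum_range_succ]
  rw [hsucc, Nat.mul_div_cancel k hpos]
  have hpred : (k - 1) * (n / (k * s t)) + n / (k * s t) = k * (n / (k * s t)) := by
    rw [Nat.sub_one_mul]
    exact Nat.sub_add_cancel (Nat.le_mul_of_pos_left _ hk)
  omega

/- Adding `s j` keeps the digits below `j` and raises `n / s j` by one; each later layer then
subtracts `(k t - 1) * (n / s (t + 1))`, which is monotone in `n`. -/
theorem greedyCount_add_le (hs : IsDivisorChain d s) {j t : ℕ} (hjt : j ≤ t) (ht : t < d)
    (x : ℕ) : greedyCount s t (x + s j) ≤ greedyCount s t x + 1 := by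
  induction t, hjt using Nat.le_induction with
  | base =>
    have hmod : ∀ i ∈ range j, (x + s j) % s (i + 1) = x % s (i + 1) := by
      intro i hi
      obtain ⟨c, hc⟩ := hs.dvd_of_le (mem_range.mp hi) ht
      rw [hc, Nat.add_mul_mod_self_left]
    simp only [greedyCount, sum_congr rfl fun i hi => congrArg (· / s i) (hmod i hi),
      Nat.add_div_right x (hs.pos ht)]
    omega
  | succ t _ ih =>
    have hmono : x / s (t + 1) ≤ (x + s j) / s (t + 1) :=
      Nat.div_le_div_right (Nat.le_add_right x _)
    have := greedyCount_succ_add hs ht x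
    have := greedyCount_succ_add hs ht (x + s j)
    have := ih (by omega)
    have := Nat.mul_le_mul_left (s (t + 1) / s t - 1) hmono
    omega

theorem sum_range_mod_div_mul (hs : IsDivisorChain d s) {t : ℕ} (ht : t < d) (n : ℕ) :
    ∑ i ∈ range t, n % s (i + 1) / s i * s i = n % s t := by
  induction t with
  | zero => simp [hs.zero, Nat.mod_one]
  | succ t ih =>
    rw [sum_range_succ, ih (by omega), ← Nat.mod_mod_of_dvd n (hs.dvd_succ ht)]
    exact Nat.mod_add_div' _ _

theorem exists_repr_greedyCount {t : ℕ} (hs : IsDivisorChain (t + 1) s) (n : ℕ) :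
    ∃ a : Fin (t + 1) → ℕ, ∑ i, a i * s i = n ∧ ∑ i, a i = greedyCount s t n := by
  refine ⟨Fin.snoc (fun i : Fin t => n % s (i + 1) / s i) (n / s t), ?_, ?_⟩
  · simp only [Fin.sum_univ_castSucc, Fin.snoc_castSucc, Fin.snoc_last, Fin.val_castSucc,
      Fin.val_last]
    rw [Fin.sum_univ_eq_sum_range (fun i => n % s (i + 1) / s i * s i),
      sum_range_mod_div_mul hs (Nat.lt_succ_self t)]
    exact Nat.mod_add_div' n (s t)
  · simp only [Fin.sum_univ_castSucc, Fin.snoc_castSucc, Fin.snoc_last, greedyCount]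
    rw [Fin.sum_univ_eq_sum_range (fun i => n % s (i + 1) / s i)]

theorem greedyCount_add_mul_le (hs : IsDivisorChain d s) {j : ℕ} (hj : j < d) (x c : ℕ) :
    greedyCount s (d - 1) (x + c * s j) ≤ greedyCount s (d - 1) x + c := by
  induction c with
  | zero => simp
  | succ c ih =>
    rw [add_one_mul, ← add_assoc]
    have := greedyCount_add_le hs (by omega : j ≤ d - 1) (by omega) (x + c * s j)
    omega

theorem greedyCount_le_sum (hs : IsDivisorChain d s) (a : Fin d → ℕ) :
    greedyCount s (d - 1) (∑ i, a i * s i) ≤ ∑ i, a i := by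
  induction (univ : Finset (Fin d)) using Finset.induction_on with
  | empty => simp [greedyCount]
  | insert j S hj ih =>
    rw [sum_insert hj, sum_insert hj, add_comm]
    have := greedyCount_add_mul_le hs j.isLt (∑ i ∈ S, a i * s i) (a j)
    omega

theorem minCoinCount_eq_greedyCount (hs : IsDivisorChain d s) (hd : 0 < d) (n : ℕ) :
    minCoinCount d s n = greedyCount s (d - 1) n := by
  obtain ⟨t, rfl⟩ : ∃ t, d = t + 1 := ⟨d - 1, by omega⟩
  obtain ⟨a, ha, hcount⟩ := exists_repr_greedyCount hs n
  have hmem : greedyCount s t n ∈ {k | ∃ a : Fin (t + 1) → ℕ,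
      (∑ i : Fin (t + 1), a i * s i) = n ∧ ∑ i, a i = k} := ⟨a, ha, hcount⟩
  refine le_antisymm (Nat.sInf_le hmem) ?_
  obtain ⟨b, hb, hbcount⟩ := Nat.sInf_mem ⟨_, hmem⟩
  calc greedyCount s t n = greedyCount s (t + 1 - 1) (∑ i, b i * s i) := by rw [hb]; rfl
    _ ≤ ∑ i, b i := greedyCount_le_sum hs b
    _ = minCoinCount (t + 1) s n := hbcount

theorem two_mul_sum_greedyCount (hs : IsDivisorChain d s) {t : ℕ} (ht : t < d) :
    2 * ∑ n ∈ range (s t), greedyCount s t n = s t * ∑ i ∈ range t, (s (i + 1) / s i - 1) := by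
  have hdigits : ∀ n ∈ range (s t), greedyCount s t n = ∑ i ∈ range t, n % s (i + 1) / s i := by
    intro n hn
    simp [greedyCount, Nat.div_eq_of_lt (mem_range.mp hn)]
  rw [sum_congr rfl hdigits, sum_comm, mul_sum, mul_sum]
  refine sum_congr rfl fun i hi => ?_
  have hit : i + 1 ≤ t := mem_range.mp hi
  have hratio := hs.ratio_mul (i := i) (by omega)
  have hquot := Nat.div_mul_cancel (hs.dvd_of_le hit ht)
  calc 2 * ∑ n ∈ range (s t), n % s (i + 1) / s i
      = 2 * ∑ n ∈ range (s t / s (i + 1) * (s (i + 1) / s i * s i)),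
          n % (s (i + 1) / s i * s i) / s i := by rw [hratio, hquot]
    _ = s t / s (i + 1) * (s (i + 1) / s i * s i) * (s (i + 1) / s i - 1) :=
      two_mul_sum_range_mod_div (hs.pos (by omega)) _ _
    _ = s t * (s (i + 1) / s i - 1) := by rw [hratio, hquot]

theorem IsDivisorChain.mul_pred_le_sum_pred_ratio (hs : IsDivisorChain d s)
    {t M : ℕ} (ht : t < d) (hst : s t = M ^ t) :
    t * (M - 1) ≤ ∑ i ∈ range t, (s (i + 1) / s i - 1) := by
  have hamgm : t * M ≤ ∑ i ∈ range t, s (i + 1) / s i := by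
    have := Real.card_mul_le_sum_of_prod_eq_pow (range t)
      (z := fun i => ((s (i + 1) / s i : ℕ) : ℝ)) (fun _ _ => by positivity) (Nat.cast_nonneg M)
      (by rw [card_range]; exact_mod_cast (hs.prod_ratio ht).trans hst)
    simp only [card_range] at this
    exact_mod_cast this
  have hratio : ∀ i ∈ range t, 1 ≤ s (i + 1) / s i := fun i hi => by
    have hid : i + 1 < d := by have := mem_range.mp hi; omega
    exact Nat.div_pos (Nat.le_of_dvd (hs.pos hid) (hs.dvd_succ hid)) (hs.pos (by omega))
  rw [sum_tsub_distrib _ hratio, sum_const, card_range, smul_eq_mul, mul_one, Nat.mul_sub_one]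
  exact Nat.sub_le_sub_right hamgm t

theorem two_mul_sum_minCoinCount (hs : IsDivisorChain d s) (hd : 0 < d) :
    2 * ∑ n ∈ range (s (d - 1)), minCoinCount d s n =
      s (d - 1) * ∑ i ∈ range (d - 1), (s (i + 1) / s i - 1) := by
  simp only [minCoinCount_eq_greedyCount hs hd]
  exact two_mul_sum_greedyCount hs (by omega)

end DivisorChain

/-- Parameter efficiency of the DilatedRNN (Theorem 1, combinatorial form,
`0`-based indexing): for any divisor chain `s 0 = 1, …, s (d-1) = m = M^(d-1)`,
the total minimal coin count over one period is at least that of the geometric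
denominations `M^0, …, M^(d-1)`; explicitly
`2 · ∑_{n<m} r_s(n) ≥ m · (d-1) · (M-1)` and the geometric chain attains this
bound. -/
theorem dilatedRNN_parameter_efficiency (d M : ℕ) (hd : 2 ≤ d) (hM : 1 ≤ M)
    (s : ℕ → ℕ) (hs0 : s 0 = 1)
    (hchain : ∀ i, i + 1 < d → ∃ k, 0 < k ∧ s (i + 1) = k * s i)
    (hsd : s (d - 1) = M ^ (d - 1)) :
    (∑ n ∈ Finset.range (M ^ (d - 1)), minCoinCount d s n ≥
        ∑ n ∈ Finset.range (M ^ (d - 1)), minCoinCount d (fun i => M ^ i) n) ∧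
      (2 * ∑ n ∈ Finset.range (M ^ (d - 1)), minCoinCount d s n ≥
        M ^ (d - 1) * (d - 1) * (M - 1)) ∧
      (2 * ∑ n ∈ Finset.range (M ^ (d - 1)), minCoinCount d (fun i => M ^ i) n =
        M ^ (d - 1) * (d - 1) * (M - 1)) := by
  have hs : IsDivisorChain d s := ⟨hs0, hchain⟩
  have hsum := two_mul_sum_minCoinCount hs (by omega)
  have hbound := hs.mul_pred_le_sum_pred_ratio (by omega : d - 1 < d) hsd
  rw [hsd] at hsum
  have hgeom : 2 * ∑ n ∈ range (M ^ (d - 1)), minCoinCount d (M ^ ·) n =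
      M ^ (d - 1) * (d - 1) * (M - 1) := by
    have hratio : ∀ i, M ^ (i + 1) / M ^ i = M := fun i => by
      rw [pow_succ, Nat.mul_div_cancel_left _ (by positivity)]
    simp only [two_mul_sum_minCoinCount (isDivisorChain_pow hM d) (by omega), hratio, sum_const,
      card_range, smul_eq_mul, mul_assoc]
  have hle := Nat.mul_le_mul_left (M ^ (d - 1)) hbound
  rw [← mul_assoc] at hle
  refine ⟨?_, ?_, hgeom⟩ <;> omega
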